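/- Two processes p and q have a maximal lower bound with respect to the 2-nested simulation preorder ≲_{2S} if and only if p ≡_S q. -/

import Mathlib

/-!
A common `≲_{2S}`-lower bound `g` of `p` and `q` gives `p ≲_S g ≲_S q` and `q ≲_S g ≲_S p`,
so `p ≡_S q` is necessary. Conversely, for `p ≡_S q` the greatest lower bound is `glb p q`, the
sum of `a.glb p' q'` over all pairs of transitions `p —a→ p'`, `q —a→ q'` with `p' ≡_S q'`.
That it lies 2-nested below `p` and below `q`, and above every common lower bound, is shown each
time by exhibiting a 2-nested simulation. The one non-structural point is `p ≲_S glb p q`: a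
transition `p —a→ p₀` is matched by an `a`-derivative `p'` of `p` that is `≲_S`-maximal above
`p₀` (there are finitely many); whatever `q —a→ q'` simulates `p'` is simulated back by some
`a`-derivative of `p`, hence by `p'` itself, so `p' ≡_S q'`.
-/

/-- Finite, loop-free CCS processes over the action set `Act`:
`p ::= 0 | a.p | p + p`. -/
inductive Proc (Act : Type) : Type
  | nil : Proc Act
  | pre : Act → Proc Act → Proc Act
  | plus : Proc Act → Proc Act → Proc Act

/-- The transition relation: `a.p —a→ p`, and `p₁ + p₂ —a→ p'` iff
`p₁ —a→ p'` or `p₂ —a→ p'`. -/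
inductive Step {Act : Type} : Proc Act → Act → Proc Act → Prop
  | pre (a : Act) (p : Proc Act) : Step (Proc.pre a p) a p
  | plusL : ∀ {p₁ p₂ p' : Proc Act} {a : Act},
      Step p₁ a p' → Step (Proc.plus p₁ p₂) a p'
  | plusR : ∀ {p₁ p₂ p' : Proc Act} {a : Act},
      Step p₂ a p' → Step (Proc.plus p₁ p₂) a p'

/-- HML formulas in negation normal form:
`φ ::= tt | ff | φ∧φ | φ∨φ | ⟨a⟩φ | [a]φ`. -/
inductive HML (Act : Type) : Type
  | tt : HML Act
  | ff : HML Act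
  | conj : HML Act → HML Act → HML Act
  | disj : HML Act → HML Act → HML Act
  | dia : Act → HML Act → HML Act
  | box : Act → HML Act → HML Act

/-- The satisfaction relation `p ⊨ φ`. -/
def Sat {Act : Type} : Proc Act → HML Act → Prop
  | _, HML.tt => True
  | _, HML.ff => False
  | p, HML.conj φ ψ => Sat p φ ∧ Sat p ψ
  | p, HML.disj φ ψ => Sat p φ ∨ Sat p ψ
  | p, HML.dia a φ => ∃ p', Step p a p' ∧ Sat p' φ
  | p, HML.box a φ => ∀ p', Step p a p' → Sat p' φ

/-- `φ` entails `ψ` iff every process satisfying `φ` satisfies `ψ`. -/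
def Entails {Act : Type} (φ ψ : HML Act) : Prop :=
  ∀ p : Proc Act, Sat p φ → Sat p ψ

/-- `R` is a simulation relation. -/
def IsSimulation {Act : Type} (R : Proc Act → Proc Act → Prop) : Prop :=
  ∀ p q, R p q → ∀ a p', Step p a p' → ∃ q', Step q a q' ∧ R p' q'

/-- The simulation preorder `≲_S`: the largest simulation. -/
def Sim {Act : Type} (p q : Proc Act) : Prop :=
  ∃ R, IsSimulation R ∧ R p q

/-- The set `I(p)` of initial actions of a process. -/
def initials {Act : Type} (p : Proc Act) : Set Act :=
  {a | ∃ p', Step p a p'}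

/-- `R` is a 2-nested simulation. -/
def Is2Sim {Act : Type} (R : Proc Act → Proc Act → Prop) : Prop :=
  ∀ p q, R p q →
    (∀ a p', Step p a p' → ∃ q', Step q a q' ∧ R p' q') ∧ Sim q p

/-- The 2-nested simulation preorder `≲_{2S}`: the largest 2-nested simulation. -/
def Sim2 {Act : Type} (p q : Proc Act) : Prop :=
  ∃ R, Is2Sim R ∧ R p q

/-- `g` is a maximal lower bound of `p` and `q` w.r.t. the preorder `r`. -/
def MaxLowerBound {Act : Type} (r : Proc Act → Proc Act → Prop) (g p q : Proc Act) : Prop :=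
  r g p ∧ r g q ∧ ∀ g' : Proc Act, r g' p → r g' q → r g' g

namespace Proc

variable {Act : Type}

theorem not_step_nil {a : Act} {p' : Proc Act} : ¬ Step nil a p' := nofun

theorem step_pre_iff {a b : Act} {p p' : Proc Act} :
    Step (pre a p) b p' ↔ b = a ∧ p' = p := by
  constructor
  · rintro ⟨⟩; exact ⟨rfl, rfl⟩
  · rintro ⟨rfl, rfl⟩; exact Step.pre _ _

theorem step_plus_iff {p₁ p₂ p' : Proc Act} {a : Act} :
    Step (plus p₁ p₂) a p' ↔ Step p₁ a p' ∨ Step p₂ a p' := by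
  constructor
  · rintro (_ | ⟨h⟩ | ⟨h⟩)
    · exact .inl h
    · exact .inr h
  · rintro (h | h)
    · exact .plusL h
    · exact .plusR h

theorem finite_setOf_step (p : Proc Act) (a : Act) : {p' | Step p a p'}.Finite := by
  induction p with
  | nil => simp [not_step_nil]
  | pre b q => exact (Set.finite_singleton q).subset fun p' h => (step_pre_iff.1 h).2
  | plus p₁ p₂ ih₁ ih₂ => simpa only [step_plus_iff, Set.ofPred_or] using ih₁.union ih₂

def bind (q : Proc Act) (f : Act → Proc Act → Proc Act) : Proc Act :=
  match q with
  | nil => nil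
  | pre b q' => f b q'
  | plus q₁ q₂ => plus (q₁.bind f) (q₂.bind f)

theorem step_bind_iff {q : Proc Act} {f : Act → Proc Act → Proc Act} {a : Act} {g : Proc Act} :
    Step (q.bind f) a g ↔ ∃ b q', Step q b q' ∧ Step (f b q') a g := by
  induction q with
  | nil => simp [bind, not_step_nil]
  | pre b q' => simp [bind, step_pre_iff]
  | plus q₁ q₂ ih₁ ih₂ => simp only [bind, step_plus_iff, ih₁, ih₂]; grind

end Proc

open Proc

section Simulation

variable {Act : Type} {p q r p' : Proc Act} {a : Act}

theorem Sim.refl (p : Proc Act) : Sim p p :=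
  ⟨Eq, fun _ _ h _ p' hs => h ▸ ⟨p', hs, rfl⟩, rfl⟩

theorem Sim.trans (hpq : Sim p q) (hqr : Sim q r) : Sim p r := by
  obtain ⟨R, hR, hpq⟩ := hpq
  obtain ⟨S, hS, hqr⟩ := hqr
  refine ⟨Relation.Comp R S, ?_, q, hpq, hqr⟩
  rintro x z ⟨y, hxy, hyz⟩ a x' hx
  obtain ⟨y', hy, hxy'⟩ := hR x y hxy a x' hx
  obtain ⟨z', hz, hyz'⟩ := hS y z hyz a y' hy
  exact ⟨z', hz, y', hxy', hyz'⟩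

theorem Sim.exists_step (h : Sim p q) (hp : Step p a p') : ∃ q', Step q a q' ∧ Sim p' q' := by
  obtain ⟨R, hR, hpq⟩ := h
  obtain ⟨q', hq, hR'⟩ := hR p q hpq a p' hp
  exact ⟨q', hq, R, hR, hR'⟩

theorem Sim2.sim (h : Sim2 p q) : Sim p q := by
  obtain ⟨R, hR, hpq⟩ := h
  exact ⟨R, fun x y hxy => (hR x y hxy).1, hpq⟩

theorem Sim2.sim_reverse (h : Sim2 p q) : Sim q p := by
  obtain ⟨R, hR, hpq⟩ := h
  exact (hR p q hpq).2

theorem Sim2.exists_step (h : Sim2 p q) (hp : Step p a p') :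
    ∃ q', Step q a q' ∧ Sim2 p' q' := by
  obtain ⟨R, hR, hpq⟩ := h
  obtain ⟨q', hq, hR'⟩ := (hR p q hpq).1 a p' hp
  exact ⟨q', hq, R, hR, hR'⟩

theorem antisymmRel_sim_of_sim2 {g : Proc Act} (hp : Sim2 g p) (hq : Sim2 g q) :
    AntisymmRel Sim p q :=
  ⟨hp.sim_reverse.trans hq.sim, hq.sim_reverse.trans hp.sim⟩

abbrev simPreorder : Preorder (Proc Act) where
  le := Sim
  le_refl := Sim.refl
  le_trans _ _ _ := Sim.trans

theorem exists_step_antisymmRel_sim_of_step {p₀ : Proc Act} (h : AntisymmRel Sim p q)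
    (hp₀ : Step p a p₀) :
    ∃ p' q', Step p a p' ∧ Step q a q' ∧ AntisymmRel Sim p' q' ∧ Sim p₀ p' := by
  let := simPreorder (Act := Act)
  obtain ⟨p', hp₀p', ⟨hp', hp'max⟩⟩ :=
    (finite_setOf_step p a |>.inter_of_left {x | Sim p₀ x}).exists_le_maximal
      (a := p₀) ⟨hp₀, Sim.refl p₀⟩
  obtain ⟨q', hq', hp'q'⟩ := h.1.exists_step hp'.1
  obtain ⟨p'', hp'', hq'p''⟩ := h.2.exists_step hq'
  have hp'p'' : Sim p' p'' := hp'q'.trans hq'p''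
  exact ⟨p', q', hp'.1, hq', ⟨hp'q', hq'p''.trans (hp'max ⟨hp'', hp'.2.trans hp'p''⟩ hp'p'')⟩,
    hp₀p'⟩

end Simulation

section GreatestLowerBound

variable {Act : Type} {p q : Proc Act}

open Classical in
noncomputable def glb : Proc Act → Proc Act → Proc Act
  | .nil, _ => .nil
  | .pre a p', q => q.bind fun b q' =>
      if a = b ∧ AntisymmRel Sim p' q' then .pre a (glb p' q') else .nil
  | .plus p₁ p₂, q => .plus (glb p₁ q) (glb p₂ q)

theorem step_glb_iff {a : Act} {g : Proc Act} :
    Step (glb p q) a g ↔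
      ∃ p' q', Step p a p' ∧ Step q a q' ∧ AntisymmRel Sim p' q' ∧ g = glb p' q' := by
  induction p generalizing g with
  | nil => simp [glb, not_step_nil]
  | pre b p' =>
    simp only [glb, step_bind_iff, step_pre_iff]
    constructor
    · rintro ⟨c, q', hq', hstep⟩
      split_ifs at hstep with hc
      · obtain ⟨rfl, rfl⟩ := step_pre_iff.1 hstep
        obtain ⟨rfl, hpq'⟩ := hc
        exact ⟨p', q', ⟨rfl, rfl⟩, hq', hpq', rfl⟩
      · exact absurd hstep not_step_nil
    · rintro ⟨r, q', ⟨rfl, hr⟩, hq', hpq', rfl⟩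
      rw [hr] at hpq' ⊢
      refine ⟨a, q', hq', ?_⟩
      rw [if_pos ⟨rfl, hpq'⟩]
      exact .pre a _
  | plus p₁ p₂ ih₁ ih₂ => simp only [glb, step_plus_iff, ih₁, ih₂]; grind

theorem sim_glb (h : AntisymmRel Sim p q) : Sim p (glb p q) := by
  refine ⟨fun x y => ∃ p q, AntisymmRel Sim p q ∧ Sim x p ∧ y = glb p q, ?_,
    p, q, h, Sim.refl p, rfl⟩
  rintro x _ ⟨p, q, hpq, hxp, rfl⟩ a x' hx
  obtain ⟨p₀, hp₀, hx'p₀⟩ := hxp.exists_step hx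
  obtain ⟨p', q', hp', hq', hpq', hp₀p'⟩ := exists_step_antisymmRel_sim_of_step hpq hp₀
  exact ⟨glb p' q', step_glb_iff.2 ⟨p', q', hp', hq', hpq', rfl⟩,
    p', q', hpq', hx'p₀.trans hp₀p', rfl⟩

theorem sim2_glb_left (h : AntisymmRel Sim p q) : Sim2 (glb p q) p := by
  refine ⟨fun x y => ∃ q, AntisymmRel Sim y q ∧ x = glb y q, ?_, q, h, rfl⟩
  rintro _ p ⟨q, hpq, rfl⟩
  refine ⟨fun a g hg => ?_, sim_glb hpq⟩
  obtain ⟨p', q', hp', -, hpq', rfl⟩ := step_glb_iff.1 hg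
  exact ⟨p', hp', q', hpq', rfl⟩

theorem sim2_glb_right (h : AntisymmRel Sim p q) : Sim2 (glb p q) q := by
  refine ⟨fun x y => ∃ p, AntisymmRel Sim p y ∧ x = glb p y, ?_, p, h, rfl⟩
  rintro _ q ⟨p, hpq, rfl⟩
  refine ⟨fun a g hg => ?_, hpq.2.trans (sim_glb hpq)⟩
  obtain ⟨p', q', -, hq', hpq', rfl⟩ := step_glb_iff.1 hg
  exact ⟨q', hq', p', hpq', rfl⟩

theorem sim2_glb {g : Proc Act} (hp : Sim2 g p) (hq : Sim2 g q) : Sim2 g (glb p q) := by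
  refine ⟨fun x y => ∃ p q, Sim2 x p ∧ Sim2 x q ∧ y = glb p q, ?_, p, q, hp, hq, rfl⟩
  rintro g _ ⟨p, q, hp, hq, rfl⟩
  refine ⟨fun a g' hg' => ?_, (sim2_glb_left (antisymmRel_sim_of_sim2 hp hq)).sim.trans
    hp.sim_reverse⟩
  obtain ⟨p', hp', hgp'⟩ := hp.exists_step hg'
  obtain ⟨q', hq', hgq'⟩ := hq.exists_step hg'
  exact ⟨glb p' q', step_glb_iff.2 ⟨p', q', hp', hq', antisymmRel_sim_of_sim2 hgp' hgq', rfl⟩,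
    p', q', hgp', hgq', rfl⟩

theorem maxLowerBound_glb (h : AntisymmRel Sim p q) : MaxLowerBound Sim2 (glb p q) p q :=
  ⟨sim2_glb_left h, sim2_glb_right h, fun _ => sim2_glb⟩

end GreatestLowerBound

theorem mlb_exists_iff_simEquiv_general {Act : Type}
    (p q : Proc Act) :
    (∃ g : Proc Act, MaxLowerBound Sim2 g p q) ↔ (Sim p q ∧ Sim q p) :=
  ⟨fun ⟨_, hgp, hgq, _⟩ => antisymmRel_sim_of_sim2 hgp hgq,
    fun h => ⟨glb p q, maxLowerBound_glb h⟩⟩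

/-- Two processes `p` and `q` have a maximal lower bound with respect to the
2-nested simulation preorder `≲_{2S}` iff `p ≡_S q`. -/
theorem mlb_exists_iff_simEquiv {Act : Type} [Fintype Act] [Nonempty Act]
    (p q : Proc Act) :
    (∃ g : Proc Act, MaxLowerBound Sim2 g p q) ↔ (Sim p q ∧ Sim q p) :=
  mlb_exists_iff_simEquiv_general p q
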